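/- Let k be a field, n ≥ 1 and x ∈ GL_n(k) an invertible matrix lying in the stratum X_m, i.e. the span of {x^j e_1 : j ≥ 0} in k^n has dimension m. Then the k-linear map l_x : k^{n−1} → k[t], l_x(v) = charpoly(u(v)·x) − charpoly(x), has rank m − 1, i.e. its image is an (m−1)-dimensional k-subspace of k[t]. -/

import Mathlib

/-!
Write `χ` for the characteristic polynomial of `x` and `a(t)` for the first column of the
adjugate of `t - x`, so that `(t - x) a = χ e₁`. The matrix `u(v) x` differs from `x` only in its
first row, by `∑ vₗ xₗ₊₁`, so expanding `det (t - u(v) x)` along the first row shows that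
`charpoly (u(v) x) - χ = -t ∑ vₗ aₗ₊₁(t)`, since `(x a)ⱼ = t aⱼ` for `j ≠ 1`. The rank of `l_x` is
therefore the rank of `a₂, …, aₙ`, i.e. of rows `2, …, n` of their coefficient matrix. Its columns,
the coefficient vectors `c_d` of `a`, satisfy `x c_{d+1} = c_d - χ_{d+1} e₁` and `c_{n-1} = e₁`,
so they span exactly the cyclic subspace generated by `e₁`, of dimension `m`; forgetting the first
coordinate, whose kernel `k e₁` lies in that subspace, lowers the dimension by one.
-/

/-- For `v = (v_1, …, v_{n-1}) ∈ k^{n-1}`, `uPos v` is the `n×n` matrix equal to the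
identity except that its first row is `(1, v_1, …, v_{n-1})`; these matrices form the
unipotent radical `U_Q` of the mirabolic subgroup of `GL_n`. -/
def uPos {k : Type*} [CommRing k] {n : ℕ} (v : Fin (n - 1) → k) :
    Matrix (Fin n) (Fin n) k :=
  Matrix.of fun i j =>
    if i = j then 1
    else if (i : ℕ) = 0 then
      (if h : 1 ≤ (j : ℕ) then v ⟨(j : ℕ) - 1, by have := j.isLt; omega⟩ else 0)
    else 0

open Polynomial Matrix

namespace Matrix

variable {R : Type*} [CommRing R] {n : Type*} [Fintype n]

theorem coeff_map_C_mulVec (M : Matrix n n R) (p : n → R[X]) (d : ℕ) (j : n) :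
    ((M.map C *ᵥ p) j).coeff d = (M *ᵥ fun l => (p l).coeff d) j := by
  simp [mulVec, dotProduct, coeff_C_mul]

theorem mulVec_mem_span (M : Matrix n n R) {s : Set (n → R)}
    (hs : ∀ w ∈ s, M *ᵥ w ∈ Submodule.span R s) {w : n → R} (hw : w ∈ Submodule.span R s) :
    M *ᵥ w ∈ Submodule.span R s :=
  (Submodule.span_le (p := (Submodule.span R s).comap M.mulVecLin)).mpr hs hw

variable [DecidableEq n]

theorem det_updateRow_eq_dotProduct_col_adjugate (A : Matrix n n R) (i : n) (r : n → R) :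
    (A.updateRow i r).det = r ⬝ᵥ A.adjugate.col i := by
  rw [← cramer_transpose_apply, cramer_eq_adjugate_mulVec, ← adjugate_transpose,
    dotProduct_comm]
  rfl

theorem det_updateRow_self_sub (A : Matrix n n R) (i : n) (w : n → R) :
    (A.updateRow i (A i - w)).det = A.det - w ⬝ᵥ A.adjugate.col i := by
  rw [det_updateRow_eq_dotProduct_col_adjugate, sub_dotProduct,
    ← det_updateRow_eq_dotProduct_col_adjugate, updateRow_eq_self]

theorem charpoly_updateRow_self_add (M : Matrix n n R) (i : n) (w : n → R) :
    (M.updateRow i (M i + w)).charpoly =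
      M.charpoly - (C ∘ w) ⬝ᵥ (charmatrix M).adjugate.col i := by
  have : charmatrix (M.updateRow i (M i + w)) =
      (charmatrix M).updateRow i (charmatrix M i - C ∘ w) := by
    ext r j
    rcases eq_or_ne r i with rfl | hr
    · simp [charmatrix_apply]; ring
    · simp [charmatrix_apply, hr]
  rw [charpoly, this, det_updateRow_self_sub, charpoly]

theorem map_C_mulVec_col_adjugate_charmatrix (M : Matrix n n R) (i : n) :
    M.map (C : R → R[X]) *ᵥ (charmatrix M).adjugate.col i =
      (X : R[X]) • (charmatrix M).adjugate.col i - M.charpoly • Pi.single i 1 := by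
  funext r
  have h := congrFun (congrFun (mul_adjugate (charmatrix M)) r) i
  simp only [mul_apply, charmatrix_apply, sub_mul, Finset.sum_sub_distrib, diagonal_apply,
    ite_mul, zero_mul, Finset.sum_ite_eq, Finset.mem_univ, if_true, smul_apply, one_apply,
    smul_eq_mul] at h
  simp only [mulVec, dotProduct, map_apply, col_apply, Pi.sub_apply, Pi.smul_apply, smul_eq_mul,
    Pi.single_apply]
  rw [charpoly]
  linear_combination -h

noncomputable def adjugateCoeff (M : Matrix n n R) (i : n) (d : ℕ) : n → R :=
  fun j => ((charmatrix M).adjugate j i).coeff d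

variable (M : Matrix n n R) (i : n)

theorem mulVec_adjugateCoeff_succ (d : ℕ) :
    M *ᵥ adjugateCoeff M i (d + 1) =
      adjugateCoeff M i d - M.charpoly.coeff (d + 1) • Pi.single i 1 := by
  funext j
  have h := congrArg (fun p => (p j).coeff (d + 1)) (map_C_mulVec_col_adjugate_charmatrix M i)
  simp only [coeff_map_C_mulVec] at h
  unfold adjugateCoeff
  simpa [coeff_X_mul, Pi.single_apply, apply_ite (coeff · (d + 1))] using h

theorem mulVec_adjugateCoeff_zero :
    M *ᵥ adjugateCoeff M i 0 = -(M.charpoly.coeff 0 • Pi.single i 1) := by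
  funext j
  have h := congrArg (fun p => (p j).coeff 0) (map_C_mulVec_col_adjugate_charmatrix M i)
  simp only [coeff_map_C_mulVec] at h
  unfold adjugateCoeff
  simpa [Pi.single_apply, apply_ite (coeff · 0)] using h

theorem adjugateCoeff_eq_zero [Nontrivial R] {d : ℕ} (hd : Fintype.card n ≤ d) :
    adjugateCoeff M i d = 0 := by
  let deg j := ((charmatrix M).adjugate j i).natDegree
  obtain ⟨D, hD⟩ : ∃ D, ∀ d ≥ D, adjugateCoeff M i d = 0 :=
    ⟨Finset.univ.sup deg + 1, fun d hd => funext fun j =>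
      coeff_eq_zero_of_natDegree_lt ((Finset.le_sup (f := deg) (Finset.mem_univ j)).trans_lt hd)⟩
  have hstep : ∀ d, Fintype.card n ≤ d →
      adjugateCoeff M i d = M *ᵥ adjugateCoeff M i (d + 1) := by
    intro d hd
    have hχ : M.charpoly.natDegree < d + 1 := by simpa using Nat.lt_succ_of_le hd
    rw [mulVec_adjugateCoeff_succ, coeff_eq_zero_of_natDegree_lt hχ, zero_smul, sub_zero]
  suffices ∀ t d, Fintype.card n ≤ d → D ≤ d + t → adjugateCoeff M i d = 0 from
    this D d hd (by omega)
  intro t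
  induction t with
  | zero => exact fun d _ h => hD d h
  | succ t ih =>
    intro d hd h
    rw [hstep d hd, ih (d + 1) (by omega) (by omega), mulVec_zero]

theorem adjugateCoeff_card_sub_one [Nontrivial R] :
    adjugateCoeff M i (Fintype.card n - 1) = Pi.single i 1 := by
  have hcard : Fintype.card n - 1 + 1 = Fintype.card n :=
    Nat.sub_add_cancel (Fintype.card_pos_iff.mpr ⟨i⟩)
  have hlead : M.charpoly.coeff (Fintype.card n) = 1 := by
    simpa using (charpoly_monic M).coeff_natDegree
  have h := mulVec_adjugateCoeff_succ M i (Fintype.card n - 1)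
  rw [hcard, adjugateCoeff_eq_zero M i le_rfl, mulVec_zero, hlead, one_smul] at h
  exact sub_eq_zero.mp h.symm

theorem degree_adjugate_charmatrix_lt [Nontrivial R] (j : n) :
    ((charmatrix M).adjugate j i).degree < Fintype.card n :=
  (degree_lt_iff_coeff_zero _ _).mpr fun _ hd => congrFun (adjugateCoeff_eq_zero M i hd) j

def cyclicSubspace (v : n → R) : Submodule R (n → R) :=
  Submodule.span R (Set.range fun j : ℕ => (M ^ j) *ᵥ v)

theorem self_mem_cyclicSubspace (v : n → R) : v ∈ cyclicSubspace M v :=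
  Submodule.subset_span ⟨0, by simp only [pow_zero, one_mulVec]⟩

variable {M} in
theorem mulVec_mem_cyclicSubspace {v w : n → R} (hw : w ∈ cyclicSubspace M v) :
    M *ᵥ w ∈ cyclicSubspace M v := by
  refine mulVec_mem_span M ?_ hw
  rintro _ ⟨j, rfl⟩
  exact Submodule.subset_span ⟨j + 1, by simp only [mulVec_mulVec, pow_succ']⟩

theorem cyclicSubspace_le {v : n → R} {W : Submodule R (n → R)} (hv : v ∈ W)
    (hW : ∀ w ∈ W, M *ᵥ w ∈ W) : cyclicSubspace M v ≤ W := by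
  rw [cyclicSubspace, Submodule.span_le]
  rintro _ ⟨j, rfl⟩
  induction j with
  | zero => simpa using hv
  | succ j ih => simpa [pow_succ', ← mulVec_mulVec] using hW _ ih

theorem span_adjugateCoeff [Nontrivial R] :
    Submodule.span R (Set.range fun d : Fin (Fintype.card n) => adjugateCoeff M i d) =
      cyclicSubspace M (Pi.single i 1) := by
  set W := Submodule.span R (Set.range fun d : Fin (Fintype.card n) => adjugateCoeff M i d)
  have hmem (d : ℕ) : adjugateCoeff M i d ∈ W := by
    rcases lt_or_ge d (Fintype.card n) with hd | hd
    · exact Submodule.subset_span ⟨⟨d, hd⟩, rfl⟩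
    · rw [adjugateCoeff_eq_zero M i hd]
      exact W.zero_mem
  have hsingle : Pi.single i 1 ∈ W := adjugateCoeff_card_sub_one M i ▸ hmem _
  apply le_antisymm
  · rw [Submodule.span_le]
    rintro _ ⟨⟨d, hd⟩, rfl⟩
    refine Nat.decreasingInduction (motive := fun d _ => adjugateCoeff M i d ∈ _)
      (fun d _ ih => ?_) ?_ hd.le
    · rw [sub_eq_iff_eq_add.mp (mulVec_adjugateCoeff_succ M i d).symm]
      exact add_mem (mulVec_mem_cyclicSubspace ih)
        (Submodule.smul_mem _ _ (self_mem_cyclicSubspace M _))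
    · rw [adjugateCoeff_eq_zero M i le_rfl]
      exact Submodule.zero_mem _
  · refine cyclicSubspace_le M hsingle fun w hw => mulVec_mem_span M ?_ hw
    rintro _ ⟨⟨d, _⟩, rfl⟩
    cases d with
    | zero =>
      rw [mulVec_adjugateCoeff_zero]
      exact W.neg_mem (W.smul_mem _ hsingle)
    | succ d =>
      rw [mulVec_adjugateCoeff_succ]
      exact W.sub_mem (hmem d) (W.smul_mem _ hsingle)

end Matrix

theorem Polynomial.finrank_span_range_eq_finrank_span_range_coeff {K ι : Type*} [Field K]
    [Fintype ι] (p : ι → K[X]) {D : ℕ} (hp : ∀ i, (p i).degree < D) :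
    Module.finrank K (Submodule.span K (Set.range p)) =
      Module.finrank K (Submodule.span K (Set.range fun d : Fin D => fun i => (p i).coeff d)) := by
  let E : (Fin D → K) →ₗ[K] K[X] :=
    (degreeLT K D).subtype ∘ₗ (degreeLTEquiv K D).symm.toLinearMap
  have hE : Function.Injective E := Subtype.val_injective.comp (degreeLTEquiv K D).symm.injective
  let A : ι → Fin D → K := fun i d => (p i).coeff d
  have hp' : p = E ∘ A := _root_.funext fun i => by
    change p i =
      ((degreeLTEquiv K D).symm (degreeLTEquiv K D ⟨p i, mem_degreeLT.mpr (hp i)⟩) : K[X])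
    rw [LinearEquiv.symm_apply_apply]
  calc Module.finrank K (Submodule.span K (Set.range p))
      = Module.finrank K (Submodule.span K (Set.range A)) := by
        rw [hp', Set.range_comp, ← Submodule.map_span]
        exact (Submodule.equivMapOfInjective E hE _).finrank_eq.symm
    _ = (of A).rank := (of A).rank_eq_finrank_span_row.symm
    _ = _ := (of A).rank_eq_finrank_span_cols

theorem Submodule.finrank_map_add_finrank_ker_of_ker_le {K V W : Type*} [Field K]
    [AddCommGroup V] [Module K V] [AddCommGroup W] [Module K W] (f : V →ₗ[K] W)
    {U : Submodule K V} [FiniteDimensional K U] (h : LinearMap.ker f ≤ U) :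
    Module.finrank K (U.map f) + Module.finrank K (LinearMap.ker f) = Module.finrank K U := by
  have := (f.domRestrict U).finrank_range_add_finrank_ker
  rwa [LinearMap.range_domRestrict, LinearMap.ker_domRestrict,
    (Submodule.comapSubtypeEquivOfLe h).finrank_eq] at this

theorem LinearMap.ker_funLeft_succ (K : Type*) [Field K] (N : ℕ) :
    LinearMap.ker (LinearMap.funLeft K K (Fin.succ : Fin N → Fin (N + 1))) =
      K ∙ Pi.single 0 1 := by
  ext w
  rw [LinearMap.mem_ker, Submodule.mem_span_singleton]
  constructor
  · intro hw
    refine ⟨w 0, funext fun j => ?_⟩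
    induction j using Fin.cases with
    | zero => simp
    | succ j => simpa [Fin.succ_ne_zero] using (congrFun hw j).symm
  · rintro ⟨a, rfl⟩
    funext j
    simp [LinearMap.funLeft_apply, Fin.succ_ne_zero]

theorem finrank_map_funLeft_succ {K : Type*} [Field K] {N : ℕ}
    {U : Submodule K (Fin (N + 1) → K)} (hU : Pi.single 0 1 ∈ U) :
    Module.finrank K (U.map (LinearMap.funLeft K K Fin.succ)) = Module.finrank K U - 1 := by
  have h := Submodule.finrank_map_add_finrank_ker_of_ker_le (LinearMap.funLeft K K Fin.succ)
    (U := U) (by rwa [LinearMap.ker_funLeft_succ, Submodule.span_singleton_le_iff_mem])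
  rw [LinearMap.ker_funLeft_succ, finrank_span_singleton (by simp)] at h
  omega

theorem uPos_mul {R : Type*} [CommRing R] {N : ℕ} (v : Fin N → R)
    (x : Matrix (Fin (N + 1)) (Fin (N + 1)) R) :
    uPos (n := N + 1) v * x = x.updateRow 0 (x 0 + ∑ l, v l • x l.succ) := by
  ext r j
  induction r using Fin.cases with
  | zero => simp [uPos, mul_apply, Fin.sum_univ_succ, (Fin.succ_ne_zero _).symm]
  | succ r => simp [uPos, mul_apply, Fin.succ_ne_zero]

theorem charpoly_uPos_mul_sub {R : Type*} [CommRing R] {N : ℕ} (v : Fin N → R)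
    (x : Matrix (Fin (N + 1)) (Fin (N + 1)) R) :
    (uPos (n := N + 1) v * x).charpoly - x.charpoly =
      -(X * ∑ l, v l • (charmatrix x).adjugate l.succ 0) := by
  have hrow (l : Fin N) : (C ∘ x l.succ) ⬝ᵥ (charmatrix x).adjugate.col 0 =
      X * (charmatrix x).adjugate l.succ 0 := by
    have h := congrFun (map_C_mulVec_col_adjugate_charmatrix x 0) l.succ
    simp only [Pi.sub_apply, Pi.smul_apply, Pi.single_eq_of_ne (Fin.succ_ne_zero l), smul_eq_mul,
      mul_zero, sub_zero] at h
    exact h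
  have hsum : C ∘ (∑ l, v l • x l.succ) = ∑ l, C (v l) • (C ∘ x l.succ) := by
    funext j
    simp
  rw [uPos_mul, charpoly_updateRow_self_add, sub_sub_cancel_left, hsum, sum_dotProduct]
  simp only [smul_dotProduct, hrow, Finset.mul_sum, smul_eq_C_mul]
  congr 1
  refine Finset.sum_congr rfl fun l _ => ?_
  ring

theorem finrank_span_charpoly_uPos_mul_sub {K : Type*} [Field K] {N : ℕ}
    (x : Matrix (Fin (N + 1)) (Fin (N + 1)) K) :
    Module.finrank K (Submodule.span K
      (Set.range fun v : Fin N → K => (uPos (n := N + 1) v * x).charpoly - x.charpoly)) =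
    Module.finrank K (Submodule.span K
      (Set.range fun l : Fin N => (charmatrix x).adjugate l.succ 0)) := by
  let L := Fintype.linearCombination K fun l : Fin N => (charmatrix x).adjugate l.succ 0
  let g := LinearMap.mulLeft K (-X : K[X])
  have hg : Function.Injective g := mul_right_injective₀ (neg_ne_zero.mpr X_ne_zero)
  have hL :
      (fun v : Fin N → K => (uPos (n := N + 1) v * x).charpoly - x.charpoly) = g ∘ₗ L := by
    funext v
    rw [charpoly_uPos_mul_sub]
    simp [g, L, Fintype.linearCombination_apply, Finset.mul_sum]
  rw [hL, ← LinearMap.coe_range, Submodule.span_eq, LinearMap.range_comp,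
    Fintype.range_linearCombination]
  exact (Submodule.equivMapOfInjective g hg _).finrank_eq.symm

theorem stmt10_general {k : Type*} [Field k] {n m : ℕ} (hn : 1 ≤ n)
    (x : Matrix (Fin n) (Fin n) k)
    (hstr : Module.finrank k (Submodule.span k
      (Set.range fun j : ℕ => (x ^ j).mulVec (Pi.single (⟨0, hn⟩ : Fin n) (1 : k)))) = m) :
    Module.finrank k (Submodule.span k
      (Set.range fun v : Fin (n - 1) → k =>
        (uPos v * x).charpoly - x.charpoly)) = m - 1 := by
  obtain ⟨N, rfl⟩ : ∃ N, n = N + 1 := ⟨n - 1, by omega⟩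
  have hzero : (⟨0, hn⟩ : Fin (N + 1)) = 0 := rfl
  rw [hzero] at hstr
  calc _ = Module.finrank k (Submodule.span k
          (Set.range fun l : Fin N => (charmatrix x).adjugate l.succ 0)) :=
        finrank_span_charpoly_uPos_mul_sub x
    _ = Module.finrank k (Submodule.span k
          (Set.range fun d : Fin (Fintype.card (Fin (N + 1))) =>
            LinearMap.funLeft k k Fin.succ (adjugateCoeff x 0 d))) :=
        finrank_span_range_eq_finrank_span_range_coeff _
          fun l => degree_adjugate_charmatrix_lt x 0 l.succ
    _ = Module.finrank k (cyclicSubspace x (Pi.single 0 1)) - 1 := by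
        rw [Set.range_comp' (LinearMap.funLeft k k Fin.succ), ← Submodule.map_span,
          span_adjugateCoeff, finrank_map_funLeft_succ (self_mem_cyclicSubspace _ _)]
    _ = m - 1 := by rw [← hstr]; rfl

/-- Let `k` be a field, `n ≥ 1` and `x ∈ GL_n(k)` lying in the stratum
`X_m`, i.e. the span of `{x^j e₁ : j ≥ 0}` has dimension `m`.  Then the linear map
`l_x : k^{n-1} → k[t]`, `l_x(v) = charpoly(u(v)·x) − charpoly(x)`, has rank `m - 1`:
its image spans an `(m-1)`-dimensional subspace of `k[t]`. -/
theorem stmt10 {k : Type*} [Field k] {n m : ℕ} (hn : 1 ≤ n)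
    (x : Matrix (Fin n) (Fin n) k) (hx : IsUnit x)
    (hstr : Module.finrank k (Submodule.span k
      (Set.range fun j : ℕ => (x ^ j).mulVec (Pi.single (⟨0, hn⟩ : Fin n) (1 : k)))) = m) :
    Module.finrank k (Submodule.span k
      (Set.range fun v : Fin (n - 1) → k =>
        (uPos v * x).charpoly - x.charpoly)) = m - 1 :=
  stmt10_general hn x hstr
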